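/- arXiv:2303.06450 — 6 statements merged into one kernel-verified Lean document; each statement's English description precedes it below -/
import Mathlib

section
/- For every even natural number n, the alternating sum ∑_{k=0}^{n/2} (-1)^k C(n-k, k) equals 0 if n ≡ 2 mod 3, equals 1 if n ≡ 0 mod 3, and equals -1 if n ≡ 1 mod 3. -/
/-!
By Pascal's rule, `D n = ∑ x ^ k * C(n - k, k)` satisfies `D (n + 2) = D (n + 1) + x * D n`
(for `x = 1` these are the Fibonacci numbers). At `x = -1` this gives `D (n + 3) = -D n`, so `D`
is `6`-periodic with values `1, 1, 0, -1, -1, 0`.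
-/

open Finset

section Semiring

variable {R : Type*} [Semiring R]

def diagonalChooseSum (x : R) (n : ℕ) : R :=
  ∑ p ∈ antidiagonal n, x ^ p.1 * (p.2.choose p.1 : R)

theorem diagonalChooseSum_add_two (x : R) (n : ℕ) :
    diagonalChooseSum x (n + 2) = diagonalChooseSum x (n + 1) + x * diagonalChooseSum x n := by
  simp only [diagonalChooseSum, Nat.antidiagonal_succ_succ', Nat.antidiagonal_succ, sum_cons,
    sum_map]
  simp [Nat.choose_succ_succ, mul_add, sum_add_distrib, mul_sum, pow_succ', mul_assoc, add_comm,
    add_left_comm]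

theorem diagonalChooseSum_eq_sum_range (x : R) (n : ℕ) :
    diagonalChooseSum x n = ∑ k ∈ range (n / 2 + 1), x ^ k * ((n - k).choose k : R) := by
  rw [diagonalChooseSum, Nat.sum_antidiagonal_eq_sum_range_succ (fun i j => x ^ i * (j.choose i : R))]
  refine (sum_subset (fun k hk => ?_) fun k hk hk' => ?_).symm
  · simp only [mem_range] at *
    omega
  · simp only [mem_range] at *
    rw [Nat.choose_eq_zero_of_lt (by omega), Nat.cast_zero, mul_zero]

end Semiring

section Ring

variable {R : Type*} [Ring R]

theorem diagonalChooseSum_neg_one_add_three (n : ℕ) :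
    diagonalChooseSum (-1 : R) (n + 3) = -diagonalChooseSum (-1) n := by
  rw [diagonalChooseSum_add_two, diagonalChooseSum_add_two (n := n)]
  noncomm_ring

theorem periodic_diagonalChooseSum_neg_one :
    Function.Periodic (diagonalChooseSum (-1 : R)) 6 := fun n => by
  rw [show n + 6 = n + 3 + 3 from rfl, diagonalChooseSum_neg_one_add_three,
    diagonalChooseSum_neg_one_add_three, neg_neg]

end Ring

theorem alternating_diagonal_sum (n : ℕ) (hn : Even n) :
    ∑ k ∈ Finset.range (n / 2 + 1), (-1 : ℤ) ^ k * (n - k).choose k =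
      if n % 3 = 2 then 0 else if n % 3 = 0 then 1 else -1 := by
  rw [← diagonalChooseSum_eq_sum_range, ← periodic_diagonalChooseSum_neg_one.map_mod_nat]
  have hmod : n % 6 = 0 ∨ n % 6 = 2 ∨ n % 6 = 4 := by
    obtain ⟨m, rfl⟩ := hn
    omega
  rcases hmod with h | h | h <;>
    simp only [h, show n % 3 = n % 6 % 3 by omega] <;> decide
end

section
/- Let G be a group and A a G-module in which multiplication by 2 is injective. If G contains a central element z acting on A by -1, then every element of H^1(G,A) has order dividing 2; more concretely, for every 1-cocycle b : G → A one has 2·b(g) = (1 - g)·b(z) for all g ∈ G. -/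
theorem two_smul_cocycle_eq {G A : Type*} [Group G] [AddCommGroup A]
    [DistribMulAction G A]
    (h2 : Function.Injective (fun a : A => 2 • a))
    (z : G) (hz : ∀ g : G, z * g = g * z) (hza : ∀ a : A, z • a = -a)
    (b : G → A) (hb : ∀ g h : G, b (g * h) = g • b h + b g) :
    ∀ g : G, 2 • b g = b z - g • b z := by
  intro g
  have h1 := hb z g
  have h2' := hb g z
  rw [hz g] at h1
  rw [h2', hza] at h1
  have hg : g • b z = -b g + b z - b g := by rw [eq_sub_iff_add_eq, h1]
  rw [two_smul, hg]
  abel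
end

section
/- Let n be a positive even integer and let S be the linear map on the space of homogeneous degree-n polynomials in variables X, Y over ℚ given by (S·P)(X,Y) = P(Y,-X). Then the dimension of the kernel of S + 1 equals (n + 1 + (-1)^{n/2+1})/2. -/
/-!
The substitution `S : P(X, Y) ↦ P(Y, -X)` squares to `(-1)^n` on forms of degree `n`, so for
even `n` it is an involution, `(1 - S) / 2` is a projection onto `ker (S + 1)`, and
`2 · dim ker (S + 1) = (n + 1) - tr S`. In the monomial basis `S` sends `X^a Y^b` to `(-1)^b X^b Y^a`, so the only nonzero diagonal entry
is `(-1)^(n/2)`, at `X^(n/2) Y^(n/2)`.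
-/

open MvPolynomial

namespace LinearMap

variable {K V : Type*} [Field K] [AddCommGroup V] [Module K V] [FiniteDimensional K V]

/-- `(1 - T) / 2` projects onto `ker (T + 1)`, and the trace of a projection is its rank. -/
theorem two_mul_finrank_ker_add_one_of_mul_self_eq_one (h2 : (2 : K) ≠ 0)
    {T : Module.End K V} (hT : T * T = 1) :
    2 * (Module.finrank K (ker (T + 1)) : K) = Module.finrank K V - trace K V T := by
  have hproj : IsProj (ker (T + 1)) ((2⁻¹ : K) • (1 - T)) := by
    constructor
    · intro x
      have hx : T (T x) = x := congrArg (· x) hT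
      simp [hx]
    · intro x hx
      have hTx : T x = -x := eq_neg_of_add_eq_zero_left hx
      simp only [smul_apply, sub_apply, Module.End.one_apply, hTx, sub_neg_eq_add, ← two_smul K x,
        smul_smul, inv_mul_cancel₀ h2, one_smul]
  have htrace := hproj.trace
  rw [map_smul, map_sub, trace_one, smul_eq_mul] at htrace
  rw [← htrace]
  field_simp

theorem finrank_ker_restrict {R M : Type*} [Ring R] [AddCommGroup M] [Module R M]
    {p : Submodule R M} {f : M →ₗ[R] M} (hf : ∀ x ∈ p, f x ∈ p) :
    Module.finrank R (ker (f.restrict hf)) = Module.finrank R ↥(p ⊓ ker f) := by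
  rw [ker_restrict, ← Submodule.map_comap_subtype, Submodule.finrank_map_subtype_eq]

end LinearMap

theorem Finsupp.equivMapDomain_swap_eq_self_iff (d : Fin 2 →₀ ℕ) :
    d.equivMapDomain (Equiv.swap 0 1) = d ↔ d 0 = d 1 := by
  refine ⟨fun h => by simpa using DFunLike.congr_fun h 1, fun h => ?_⟩
  ext i
  fin_cases i <;> simp [h]

namespace MvPolynomial

section Homogeneous

variable (σ R : Type*) [CommSemiring R]

instance [Finite σ] (n : ℕ) : Module.Finite R (homogeneousSubmodule σ R n) :=
  Module.Finite.iff_fg.2 (homogeneousSubmodule_fg σ R n)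

variable [Fintype σ] [DecidableEq σ]

theorem setOf_degree_eq_finsuppAntidiag (n : ℕ) :
    {d : σ →₀ ℕ | d.degree = n} = (Finset.univ : Finset σ).finsuppAntidiag n := by
  ext d
  simp [Finsupp.degree_eq_sum]

noncomputable def homogeneousBasis (n : ℕ) :
    Module.Basis ((Finset.univ : Finset σ).finsuppAntidiag n) R (homogeneousSubmodule σ R n) :=
  (basisRestrictSupport R _).map <| LinearEquiv.ofEq _ _ <| by
    rw [← setOf_degree_eq_finsuppAntidiag, homogeneousSubmodule_eq_finsupp_supported]; rfl

variable {σ R}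

@[simp]
theorem homogeneousBasis_repr {n : ℕ} (P : homogeneousSubmodule σ R n)
    (d : (Finset.univ : Finset σ).finsuppAntidiag n) :
    (homogeneousBasis σ R n).repr P d = coeff d (P : MvPolynomial σ R) := rfl

@[simp]
theorem coe_homogeneousBasis {n : ℕ} (d : (Finset.univ : Finset σ).finsuppAntidiag n) :
    (homogeneousBasis σ R n d : MvPolynomial σ R) = monomial d 1 := by
  have hd : (d : σ →₀ ℕ).degree = n := by
    rw [Finsupp.degree_eq_sum]; exact (Finset.mem_finsuppAntidiag.1 d.2).1
  have hmem : monomial (d : σ →₀ ℕ) (1 : R) ∈ homogeneousSubmodule σ R n :=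
    isHomogeneous_monomial _ hd
  suffices homogeneousBasis σ R n d = ⟨_, hmem⟩ from congrArg Subtype.val this
  rw [Module.Basis.apply_eq_iff]
  ext d'
  simp only [homogeneousBasis_repr, coeff_monomial, Finsupp.single_apply, Subtype.ext_iff]

theorem finrank_homogeneousSubmodule (K : Type*) [Field K] (n : ℕ) :
    Module.finrank K (homogeneousSubmodule σ K n) = (Fintype.card σ + n - 1).choose n := by
  rw [Module.finrank_eq_card_basis (homogeneousBasis σ K n), Fintype.card_coe,
    Finset.card_finsuppAntidiag_nat_eq_choose, Finset.card_univ]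

end Homogeneous

section Rotation

variable {R : Type*} [CommRing R]

theorem aeval_rotation_monomial (d : Fin 2 →₀ ℕ) (c : R) :
    aeval ![X 1, -X 0] (monomial d c)
      = monomial (d.equivMapDomain (Equiv.swap 0 1)) ((-1) ^ d 1 * c) := by
  rw [aeval_monomial, monomial_eq, Finsupp.prod_fintype _ _ (by simp),
    Finsupp.prod_fintype _ _ (by simp)]
  simp only [algebraMap_eq, Fin.prod_univ_two, Matrix.cons_val_zero, Matrix.cons_val_one,
    Matrix.cons_val_fin_one, Finsupp.equivMapDomain_apply, Equiv.symm_swap, Equiv.swap_apply_left,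
    Equiv.swap_apply_right, C_mul, C_pow, C_neg, C_1]
  rw [neg_pow]
  ring

theorem IsHomogeneous.aeval_rotation {P : MvPolynomial (Fin 2) R} {n : ℕ}
    (hP : P.IsHomogeneous n) :
    (MvPolynomial.aeval ![X 1, -X 0] P : MvPolynomial (Fin 2) R).IsHomogeneous n := by
  have hg : ∀ i, (![X 1, -X 0] i : MvPolynomial (Fin 2) R).IsHomogeneous 1 :=
    Fin.forall_fin_two.2 ⟨isHomogeneous_X R 1, (isHomogeneous_X R 0).neg⟩
  simpa using hP.aeval _ hg

variable (R) in
noncomputable def homogeneousRotation (n : ℕ) : Module.End R (homogeneousSubmodule (Fin 2) R n) :=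
  (aeval ![X 1, -X 0] : MvPolynomial (Fin 2) R →ₐ[R] MvPolynomial (Fin 2) R).toLinearMap.restrict
    fun _ hP => hP.aeval_rotation

theorem coe_homogeneousRotation_apply {n : ℕ} (P : homogeneousSubmodule (Fin 2) R n) :
    (homogeneousRotation R n P : MvPolynomial (Fin 2) R)
      = aeval ![X 1, -X 0] (P : MvPolynomial (Fin 2) R) :=
  rfl

theorem homogeneousRotation_mul_self {n : ℕ} (hn : Even n) :
    homogeneousRotation R n * homogeneousRotation R n = 1 := by
  refine (homogeneousBasis (Fin 2) R n).ext fun d => Subtype.ext ?_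
  have hd : d.1 0 + d.1 1 = n := by
    simpa using (Finset.mem_finsuppAntidiag.1 d.2).1
  rw [Module.End.mul_apply, coe_homogeneousRotation_apply, coe_homogeneousRotation_apply,
    coe_homogeneousBasis, aeval_rotation_monomial, aeval_rotation_monomial,
    ← Finsupp.equivMapDomain_trans, Equiv.swap_swap, Finsupp.equivMapDomain_refl,
    Finsupp.equivMapDomain_apply, Equiv.symm_swap, Equiv.swap_apply_right, mul_one, ← pow_add,
    hd, hn.neg_one_pow, Module.End.one_apply, coe_homogeneousBasis]

theorem trace_homogeneousRotation {n : ℕ} (hn : Even n) :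
    LinearMap.trace R _ (homogeneousRotation R n) = (-1) ^ (n / 2) := by
  obtain ⟨m, rfl⟩ := hn
  rw [show (m + m) / 2 = m by omega,
    LinearMap.trace_eq_matrix_trace R (homogeneousBasis (Fin 2) R _), Matrix.trace]
  simp only [Matrix.diag_apply, LinearMap.toMatrix_apply, homogeneousBasis_repr,
    coe_homogeneousRotation_apply, coe_homogeneousBasis, aeval_rotation_monomial, coeff_monomial,
    mul_one, Finsupp.equivMapDomain_swap_eq_self_iff]
  rw [Finset.sum_coe_sort _ fun d : Fin 2 →₀ ℕ => if d 0 = d 1 then (-1 : R) ^ d 1 else 0]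
  have hmid : Finsupp.single 0 m + Finsupp.single 1 m
      ∈ (Finset.univ : Finset (Fin 2)).finsuppAntidiag (m + m) := by
    simp [Finsupp.single_apply]
  rw [Finset.sum_eq_single_of_mem _ hmid]
  · simp
  · intro d hd hne
    rw [if_neg]
    contrapose! hne
    have hsum : d 0 + d 1 = m + m := by simpa using (Finset.mem_finsuppAntidiag.1 hd).1
    ext i
    fin_cases i <;> simp <;> omega

end Rotation

end MvPolynomial

theorem dim_ker_S_add_one_general (n : ℕ) (he : Even n) :
    (2 * Module.finrank ℚ
        ↥(homogeneousSubmodule (Fin 2) ℚ n ⊓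
          LinearMap.ker
            ((aeval ![X 1, -X 0] :
              MvPolynomial (Fin 2) ℚ →ₐ[ℚ] MvPolynomial (Fin 2) ℚ).toLinearMap
              + LinearMap.id)) : ℤ)
      = n + 1 + (-1) ^ (n / 2 + 1) := by
  have hmaps : ∀ P ∈ homogeneousSubmodule (Fin 2) ℚ n,
      ((aeval ![X 1, -X 0] : MvPolynomial (Fin 2) ℚ →ₐ[ℚ] MvPolynomial (Fin 2) ℚ).toLinearMap
        + LinearMap.id : MvPolynomial (Fin 2) ℚ →ₗ[ℚ] MvPolynomial (Fin 2) ℚ) P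
        ∈ homogeneousSubmodule (Fin 2) ℚ n :=
    fun _ hP => add_mem hP.aeval_rotation hP
  have hrestrict : LinearMap.restrict _ hmaps = homogeneousRotation ℚ n + 1 := rfl
  have key := LinearMap.two_mul_finrank_ker_add_one_of_mul_self_eq_one (two_ne_zero (α := ℚ))
    (homogeneousRotation_mul_self he)
  rw [trace_homogeneousRotation he, finrank_homogeneousSubmodule, Fintype.card_fin, ← hrestrict,
    LinearMap.finrank_ker_restrict, show 2 + n - 1 = n + 1 by omega,
    Nat.choose_succ_self_right] at key
  push_cast at key
  rw [pow_succ, mul_neg_one, ← sub_eq_add_neg]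
  exact_mod_cast key

theorem dim_ker_S_add_one (n : ℕ) (hn : 0 < n) (he : Even n) :
    (2 * Module.finrank ℚ
        ↥(homogeneousSubmodule (Fin 2) ℚ n ⊓
          LinearMap.ker
            ((aeval ![X 1, -X 0] :
              MvPolynomial (Fin 2) ℚ →ₐ[ℚ] MvPolynomial (Fin 2) ℚ).toLinearMap
              + LinearMap.id)) : ℤ)
      = n + 1 + (-1) ^ (n / 2 + 1) :=
  dim_ker_S_add_one_general n he
end

section
/- Let n be even, and let S, W act on homogeneous degree-n polynomials over ℚ by (S·P)(X,Y) = P(Y,-X) and (W·P)(X,Y) = P(Y,X). Then the dimension of {P : S·P = -P and W·P = P} equals (n + 1 + (-1)^{n/2+1})/4. -/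
/-!
Write `P = ∑ c a b • X 0 ^ a * X 1 ^ b`. Invariance under the swap `W` says `c a b = c b a`;
given that, `S • P = -P` says `(-1) ^ a * c a b = -c a b`, which kills every coefficient with `a`
even. As `n` is even, the coefficients left are those with `a` and `b` odd, forming orbits
`{(a, b), (b, a)}`, so `P` is determined by the free coefficients `c a (n - a)` with `a` odd
and `a ≤ n / 2`, of which there are `(n / 2 + 1) / 2`.
-/

open MvPolynomial Module

noncomputable def expPair (a b : ℕ) : Fin 2 →₀ ℕ :=
  Finsupp.single 0 a + Finsupp.single 1 b

@[simp] lemma expPair_apply_zero (a b : ℕ) : expPair a b 0 = a := by simp [expPair]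

@[simp] lemma expPair_apply_one (a b : ℕ) : expPair a b 1 = b := by simp [expPair]

@[simp] lemma expPair_inj {a b c d : ℕ} : expPair a b = expPair c d ↔ a = c ∧ b = d := by
  refine ⟨fun h => ⟨?_, ?_⟩, fun ⟨hac, hbd⟩ => hac ▸ hbd ▸ rfl⟩
  · simpa using congr($h 0)
  · simpa using congr($h 1)

lemma exists_eq_expPair (e : Fin 2 →₀ ℕ) : ∃ a b, e = expPair a b :=
  ⟨e 0, e 1, by ext i; fin_cases i <;> simp⟩

@[simp] lemma degree_expPair (a b : ℕ) : (expPair a b).degree = a + b := by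
  simp [expPair, Finsupp.degree_single]

section Coefficients

variable {R : Type*} [CommRing R]

lemma aeval_monomial_expPair (u v : MvPolynomial (Fin 2) R) (a b : ℕ) (c : R) :
    aeval ![u, v] (monomial (expPair a b) c) = C c * u ^ a * v ^ b := by
  rw [aeval_monomial, expPair,
    Finsupp.prod_add_index' (fun _ => pow_zero _) (fun _ _ _ => pow_add _ _ _),
    Finsupp.prod_single_index (by exact pow_zero _),
    Finsupp.prod_single_index (by exact pow_zero _)]
  simp [mul_assoc]

lemma monomial_expPair (a b : ℕ) (c : R) :
    monomial (expPair a b) c = C c * X 0 ^ a * X 1 ^ b := by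
  have hX : ![X 0, X 1] = (X : Fin 2 → MvPolynomial (Fin 2) R) := by
    funext i; fin_cases i <;> rfl
  rw [← aeval_monomial_expPair, hX, aeval_X_left_apply]

lemma coeff_expPair_monomial (a b p q : ℕ) (c : R) :
    coeff (expPair a b) (monomial (expPair p q) c) = if a = p ∧ b = q then c else 0 := by
  simp [coeff_monomial, eq_comm]

lemma aeval_swap_monomial (a b : ℕ) (c : R) :
    aeval ![X 1, X 0] (monomial (expPair a b) c) = monomial (expPair b a) c := by
  rw [aeval_monomial_expPair, monomial_expPair]; ring

lemma aeval_rotate_monomial (a b : ℕ) (c : R) :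
    aeval ![X 1, -X 0] (monomial (expPair a b) c) = monomial (expPair b a) ((-1) ^ b * c) := by
  rw [aeval_monomial_expPair, monomial_expPair, neg_pow, map_mul, map_pow, map_neg, map_one]
  ring

lemma coeff_aeval_swap (a b : ℕ) (P : MvPolynomial (Fin 2) R) :
    coeff (expPair a b) (aeval ![X 1, X 0] P) = coeff (expPair b a) P := by
  induction P using MvPolynomial.induction_on' with
  | monomial d c =>
    obtain ⟨p, q, rfl⟩ := exists_eq_expPair d
    rw [aeval_swap_monomial, coeff_expPair_monomial, coeff_expPair_monomial]
    simp only [and_comm]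
  | add P Q hP hQ => simp only [map_add, coeff_add, hP, hQ]

lemma coeff_aeval_rotate (a b : ℕ) (P : MvPolynomial (Fin 2) R) :
    coeff (expPair a b) (aeval ![X 1, -X 0] P) = (-1) ^ a * coeff (expPair b a) P := by
  induction P using MvPolynomial.induction_on' with
  | monomial d c =>
    obtain ⟨p, q, rfl⟩ := exists_eq_expPair d
    rw [aeval_rotate_monomial, coeff_expPair_monomial, coeff_expPair_monomial]
    split_ifs with h₁ h₂ h₂ <;> simp_all
  | add P Q hP hQ => simp only [map_add, coeff_add, hP, hQ, mul_add]

end Coefficients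

section Subspace

variable (K : Type*) [Field K]

noncomputable def antiinvariantSymmetric (n : ℕ) : Submodule K (MvPolynomial (Fin 2) K) :=
  homogeneousSubmodule (Fin 2) K n ⊓
    LinearMap.ker
      ((aeval ![X 1, -X 0] :
        MvPolynomial (Fin 2) K →ₐ[K] MvPolynomial (Fin 2) K).toLinearMap
        + LinearMap.id) ⊓
    LinearMap.ker
      ((aeval ![X 1, X 0] :
        MvPolynomial (Fin 2) K →ₐ[K] MvPolynomial (Fin 2) K).toLinearMap
        - LinearMap.id)

variable {K}

lemma mem_antiinvariantSymmetric {n : ℕ} {P : MvPolynomial (Fin 2) K} :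
    P ∈ antiinvariantSymmetric K n ↔
      P.IsHomogeneous n ∧ aeval ![X 1, -X 0] P = -P ∧ aeval ![X 1, X 0] P = P := by
  simp only [antiinvariantSymmetric, Submodule.mem_inf, LinearMap.mem_ker, LinearMap.add_apply,
    LinearMap.sub_apply, LinearMap.id_apply, AlgHom.toLinearMap_apply,
    mem_homogeneousSubmodule, and_assoc, add_eq_zero_iff_eq_neg, sub_eq_zero]

lemma coeff_expPair_comm_of_mem {n a b : ℕ} {P : MvPolynomial (Fin 2) K}
    (hP : P ∈ antiinvariantSymmetric K n) : coeff (expPair a b) P = coeff (expPair b a) P := by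
  rw [← coeff_aeval_swap, (mem_antiinvariantSymmetric.mp hP).2.2]

lemma coeff_expPair_eq_zero_of_even [CharZero K] {n a b : ℕ} {P : MvPolynomial (Fin 2) K}
    (hP : P ∈ antiinvariantSymmetric K n) (ha : Even a) : coeff (expPair a b) P = 0 := by
  have h := coeff_aeval_rotate a b P
  rw [(mem_antiinvariantSymmetric.mp hP).2.1, coeff_neg, ha.neg_one_pow, one_mul,
    coeff_expPair_comm_of_mem (a := b) hP] at h
  exact self_eq_neg.mp h.symm

lemma monomial_add_swap_mem {a b : ℕ} (ha : Odd a) (hb : Odd b) :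
    monomial (expPair a b) (1 : K) + monomial (expPair b a) 1 ∈
      antiinvariantSymmetric K (a + b) := by
  refine mem_antiinvariantSymmetric.mpr ⟨?_, ?_, ?_⟩
  · exact (isHomogeneous_monomial _ (degree_expPair a b)).add
      (isHomogeneous_monomial _ ((degree_expPair b a).trans (add_comm b a)))
  · rw [map_add, aeval_rotate_monomial, aeval_rotate_monomial, hb.neg_one_pow, ha.neg_one_pow,
      neg_one_mul, map_neg, map_neg, neg_add, add_comm]
  · rw [map_add, aeval_swap_monomial, aeval_swap_monomial, add_comm]

end Subspace

section Dimension

variable (K : Type*) [Field K] (n : ℕ)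

/-- Coordinate `j` is the coefficient of `X 0 ^ a * X 1 ^ (n - a)` for the `j`-th odd
`a ≤ n / 2`. -/
noncomputable def oddCoeffs : antiinvariantSymmetric K n →ₗ[K] (Fin ((n / 2 + 1) / 2) → K) :=
  LinearMap.pi fun j =>
    (lcoeff K (expPair (2 * j + 1) (n - (2 * j + 1)))).comp (antiinvariantSymmetric K n).subtype

variable {K n}

lemma oddCoeffs_apply (P : antiinvariantSymmetric K n) (j : Fin ((n / 2 + 1) / 2)) :
    oddCoeffs K n P j =
      coeff (expPair (2 * j + 1) (n - (2 * j + 1))) (P : MvPolynomial (Fin 2) K) :=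
  rfl

variable [CharZero K]

lemma oddCoeffs_injective (hn : Even n) : Function.Injective (oddCoeffs K n) := by
  rw [injective_iff_map_eq_zero]
  rintro ⟨P, hP⟩ hzero
  have hlow (a : ℕ) (ha : Odd a) (han : 2 * a ≤ n) : coeff (expPair a (n - a)) P = 0 := by
    obtain ⟨j, rfl⟩ := ha
    exact congr_fun hzero ⟨j, by omega⟩
  suffices h : ∀ a b, coeff (expPair a b) P = 0 by
    ext e
    obtain ⟨a, b, rfl⟩ := exists_eq_expPair e
    exact h a b
  intro a b
  by_cases hab : a + b = n
  · rcases Nat.even_or_odd a with ha | ha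
    · exact coeff_expPair_eq_zero_of_even hP ha
    rcases le_total a b with hle | hle
    · simpa [← hab] using hlow a ha (by omega)
    · have hb : Odd b := by
        obtain ⟨k, hk⟩ := hn
        obtain ⟨t, rfl⟩ := ha
        exact ⟨k - t - 1, by omega⟩
      rw [coeff_expPair_comm_of_mem hP]
      simpa [← hab] using hlow b hb (by omega)
  · exact (mem_antiinvariantSymmetric.mp hP).1.coeff_eq_zero (by simpa using hab)

lemma oddCoeffs_surjective (hn : Even n) : Function.Surjective (oddCoeffs K n) := by
  rw [← LinearMap.range_eq_top, eq_top_iff, ← (Pi.basisFun K _).span_eq, Submodule.span_le]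
  rintro _ ⟨j, rfl⟩
  obtain ⟨m, rfl⟩ := hn
  have hj := j.isLt
  have hsum : (2 * j + 1) + (m + m - (2 * j + 1)) = m + m := by omega
  have ha : Odd (2 * (j : ℕ) + 1) := odd_two_mul_add_one _
  have hb : Odd (m + m - (2 * j + 1)) := ⟨m - j - 1, by omega⟩
  let P : antiinvariantSymmetric K (m + m) := ⟨_, hsum ▸ monomial_add_swap_mem ha hb⟩
  -- the central monomial is counted twice when `2 * j + 1 = n / 2`
  set c : K := if 2 * (j : ℕ) + 1 = m + m - (2 * j + 1) then 2 else 1 with hc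
  have hc0 : c ≠ 0 := by rw [hc]; split_ifs <;> norm_num
  have hP : oddCoeffs K (m + m) P = c • Pi.single j 1 := by
    funext j'
    have hj' := j'.isLt
    simp only [oddCoeffs_apply, P, coeff_add, coeff_expPair_monomial, Pi.smul_apply,
      Pi.single_apply, Fin.ext_iff, hc]
    split_ifs <;> first | omega | norm_num
  rw [SetLike.mem_coe, Pi.basisFun_apply, ← Submodule.smul_mem_iff _ hc0, ← hP]
  exact LinearMap.mem_range_self _ P

lemma finrank_antiinvariantSymmetric (hn : Even n) :
    finrank K (antiinvariantSymmetric K n) = (n / 2 + 1) / 2 := by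
  rw [(LinearEquiv.ofBijective _ ⟨oddCoeffs_injective hn, oddCoeffs_surjective hn⟩).finrank_eq,
    finrank_fin_fun]

end Dimension

lemma four_mul_succ_div_two (m : ℕ) :
    (4 * ((m + 1) / 2 : ℕ) : ℤ) = 2 * m + 1 + (-1) ^ (m + 1) := by
  rcases Nat.even_or_odd (m + 1) with h | h
  · rw [h.neg_one_pow]; obtain ⟨k, hk⟩ := h; omega
  · rw [h.neg_one_pow]; obtain ⟨k, hk⟩ := h; omega

theorem dim_antiinvariant_symmetric (n : ℕ) (he : Even n) :
    (4 * finrank ℚ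
        ↥(homogeneousSubmodule (Fin 2) ℚ n ⊓
          LinearMap.ker
            ((aeval ![X 1, -X 0] :
              MvPolynomial (Fin 2) ℚ →ₐ[ℚ] MvPolynomial (Fin 2) ℚ).toLinearMap
              + LinearMap.id) ⊓
          LinearMap.ker
            ((aeval ![X 1, X 0] :
              MvPolynomial (Fin 2) ℚ →ₐ[ℚ] MvPolynomial (Fin 2) ℚ).toLinearMap
              - LinearMap.id)) : ℤ)
      = n + 1 + (-1) ^ (n / 2 + 1) := by
  change (4 * finrank ℚ (antiinvariantSymmetric ℚ n) : ℤ) = _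
  obtain ⟨m, rfl⟩ := he
  rw [finrank_antiinvariantSymmetric ⟨m, rfl⟩, ← two_mul, Nat.mul_div_cancel_left m two_pos,
    four_mul_succ_div_two]
  push_cast
  ring
end

section
/- Let A ∈ SL₂(ℤ) be a matrix with trace of absolute value greater than 2 (hyperbolic), and let B ∈ SL₂(ℤ) satisfy B² = -I and BAB⁻¹ = ±A⁻¹. Then BAB⁻¹ = A⁻¹ (the minus sign is impossible), and writing A = [[a,b],[c,d]] and B = [[x,y],[z,-x]], the integers x, y satisfy bx² + (d-a)xy - cy² = -b. -/
open Matrix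

theorem hyperbolic_conjugation_quadratic_form
    (A B : Matrix.SpecialLinearGroup (Fin 2) ℤ)
    (hA : 2 < |Matrix.trace (A : Matrix (Fin 2) (Fin 2) ℤ)|)
    (hB : ((B : Matrix (Fin 2) (Fin 2) ℤ)) ^ 2 = -1)
    (hconj : B * A * B⁻¹ = A⁻¹ ∨
      ((B * A * B⁻¹ : Matrix.SpecialLinearGroup (Fin 2) ℤ) : Matrix (Fin 2) (Fin 2) ℤ)
        = -((A⁻¹ : Matrix.SpecialLinearGroup (Fin 2) ℤ) : Matrix (Fin 2) (Fin 2) ℤ)) :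
    B * A * B⁻¹ = A⁻¹ ∧
      (A : Matrix (Fin 2) (Fin 2) ℤ) 0 1 * ((B : Matrix (Fin 2) (Fin 2) ℤ) 0 0) ^ 2
        + ((A : Matrix (Fin 2) (Fin 2) ℤ) 1 1 - (A : Matrix (Fin 2) (Fin 2) ℤ) 0 0)
          * (B : Matrix (Fin 2) (Fin 2) ℤ) 0 0 * (B : Matrix (Fin 2) (Fin 2) ℤ) 0 1
        - (A : Matrix (Fin 2) (Fin 2) ℤ) 1 0 * ((B : Matrix (Fin 2) (Fin 2) ℤ) 0 1) ^ 2
      = -(A : Matrix (Fin 2) (Fin 2) ℤ) 0 1 := by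
  rcases hconj with h | h
  · refine ⟨h, ?_⟩
    -- B * A = A⁻¹ * B in the group
    have hg : B * A = A⁻¹ * B := mul_inv_eq_iff_eq_mul.mp h
    have hm : (B : Matrix (Fin 2) (Fin 2) ℤ) * (A : Matrix (Fin 2) (Fin 2) ℤ)
        = ((A⁻¹ : Matrix.SpecialLinearGroup (Fin 2) ℤ) : Matrix (Fin 2) (Fin 2) ℤ)
          * (B : Matrix (Fin 2) (Fin 2) ℤ) := by
      exact_mod_cast congrArg (fun M : Matrix.SpecialLinearGroup (Fin 2) ℤ =>
        (M : Matrix (Fin 2) (Fin 2) ℤ)) hg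
    rw [Matrix.SpecialLinearGroup.coe_inv, Matrix.adjugate_fin_two] at hm
    have e1 := congrFun (congrFun hm 0) 0
    have e0 := congrFun (congrFun hB 0) 0
    simp [Matrix.mul_apply, Fin.sum_univ_two, pow_two] at e1 e0
    linear_combination -((B : Matrix (Fin 2) (Fin 2) ℤ) 0 1) * e1
      + (A : Matrix (Fin 2) (Fin 2) ℤ) 0 1 * e0
  · exfalso
    have ht := congrArg Matrix.trace h
    rw [Matrix.SpecialLinearGroup.coe_mul, Matrix.SpecialLinearGroup.coe_mul] at ht
    have h1 : Matrix.trace ((B : Matrix (Fin 2) (Fin 2) ℤ) * (A : Matrix (Fin 2) (Fin 2) ℤ)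
        * ((B⁻¹ : Matrix.SpecialLinearGroup (Fin 2) ℤ) : Matrix (Fin 2) (Fin 2) ℤ))
        = Matrix.trace (A : Matrix (Fin 2) (Fin 2) ℤ) := by
      rw [Matrix.trace_mul_comm]
      have : ((B⁻¹ : Matrix.SpecialLinearGroup (Fin 2) ℤ) : Matrix (Fin 2) (Fin 2) ℤ)
          * (B : Matrix (Fin 2) (Fin 2) ℤ) = 1 := by
        exact_mod_cast congrArg (fun M : Matrix.SpecialLinearGroup (Fin 2) ℤ =>
          (M : Matrix (Fin 2) (Fin 2) ℤ)) (inv_mul_cancel B)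
      rw [← mul_assoc, this, one_mul]
    have h2 : Matrix.trace (-((A⁻¹ : Matrix.SpecialLinearGroup (Fin 2) ℤ)
        : Matrix (Fin 2) (Fin 2) ℤ)) = -Matrix.trace (A : Matrix (Fin 2) (Fin 2) ℤ) := by
      rw [Matrix.trace_neg, Matrix.SpecialLinearGroup.coe_inv, Matrix.adjugate_fin_two]
      simp [Matrix.trace_fin_two]
      ring
    rw [h1, h2] at ht
    have : Matrix.trace (A : Matrix (Fin 2) (Fin 2) ℤ) = 0 := by linarith
    rw [this] at hA
    simp at hA
end

section
/- In PSL₂(ℤ), the normalizer of the cyclic subgroup generated by the image of [[1,k],[0,1]] (k a nonzero integer) is the cyclic subgroup generated by the image of [[1,1],[0,1]]. -/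
open Matrix ModularGroup Subgroup

theorem normalizer_parabolic_in_PSL2 (k : ℤ) (hk : k ≠ 0)
    (u v : Matrix.SpecialLinearGroup (Fin 2) ℤ)
    (hu : (u : Matrix (Fin 2) (Fin 2) ℤ) = !![1, k; 0, 1])
    (hv : (v : Matrix (Fin 2) (Fin 2) ℤ) = !![1, 1; 0, 1]) :
    Subgroup.normalizer
        (Subgroup.zpowers
          (QuotientGroup.mk' (Subgroup.center (Matrix.SpecialLinearGroup (Fin 2) ℤ)) u))
      = Subgroup.zpowers
          (QuotientGroup.mk' (Subgroup.center (Matrix.SpecialLinearGroup (Fin 2) ℤ)) v) := by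
  have hvT : v = ModularGroup.T := Subtype.ext (by rw [hv, ModularGroup.coe_T])
  have huT : u = ModularGroup.T ^ k := Subtype.ext (by rw [hu, ModularGroup.coe_T_zpow])
  subst hvT huT
  set π := QuotientGroup.mk' (Subgroup.center (Matrix.SpecialLinearGroup (Fin 2) ℤ)) with hπ
  ext x
  constructor
  · intro hx
    obtain ⟨g, rfl⟩ := QuotientGroup.mk'_surjective _ x
    have h1 : π g * π (T ^ k) * (π g)⁻¹ ∈ Subgroup.zpowers (π (T ^ k)) :=
      (Subgroup.mem_normalizer_iff.mp hx (π (T ^ k))).mp (Subgroup.mem_zpowers _)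
    obtain ⟨n, hn⟩ := h1
    have hn' : π (T ^ k) ^ n = π g * π (T ^ k) * (π g)⁻¹ := hn
    have h2 : π (T ^ (k * n)) = π (g * T ^ k * g⁻¹) := by
      rw [_root_.map_mul, _root_.map_mul, _root_.map_inv, ← hn', ← _root_.map_zpow, ← _root_.zpow_mul]
    rw [hπ] at h2
    obtain ⟨z, hz, hzeq⟩ := (QuotientGroup.mk'_eq_mk' (N := Subgroup.center (Matrix.SpecialLinearGroup (Fin 2) ℤ))).mp h2
    obtain ⟨r, hr2, hrz⟩ := Matrix.SpecialLinearGroup.mem_center_iff.mp hz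
    -- matrix equation: g * T^k = T^(k*n) * z * g  after rearranging
    have E : !![1, k * n; 0, 1] * ((z : Matrix (Fin 2) (Fin 2) ℤ) * (g : Matrix (Fin 2) (Fin 2) ℤ))
        = (g : Matrix (Fin 2) (Fin 2) ℤ) * !![1, k; 0, 1] := by
      have h3 : T ^ (k * n) * (z * g) = g * T ^ k := by
        rw [← mul_assoc, hzeq]; group
      have h4 := congrArg (fun m : Matrix.SpecialLinearGroup (Fin 2) ℤ => (m : Matrix (Fin 2) (Fin 2) ℤ)) h3
      simpa [ModularGroup.coe_T_zpow, mul_assoc] using h4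
    have hzcoe : (z : Matrix (Fin 2) (Fin 2) ℤ) = Matrix.diagonal (fun _ => r) := by
      rw [← hrz, Matrix.scalar_apply]
    rw [hzcoe] at E
    set a := (g : Matrix (Fin 2) (Fin 2) ℤ) 0 0 with hA
    set b := (g : Matrix (Fin 2) (Fin 2) ℤ) 0 1 with hB
    set c := (g : Matrix (Fin 2) (Fin 2) ℤ) 1 0 with hC
    set d := (g : Matrix (Fin 2) (Fin 2) ℤ) 1 1 with hD
    have hdet : a * d - b * c = 1 := by
      have := g.2
      rwa [Matrix.det_fin_two] at this
    have e10 : c = r * c := by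
      have := congrFun (congrFun E.symm 1) 0
      simpa [Matrix.mul_apply, Fin.sum_univ_two, Matrix.diagonal] using this
    have e11 : c * k + d = r * d := by
      have := congrFun (congrFun E.symm 1) 1
      simpa [Matrix.mul_apply, Fin.sum_univ_two, Matrix.diagonal] using this
    have hrval : r = 1 ∨ r = -1 := by
      have : r * r = 1 := by rw [← sq]; simpa using hr2
      rcases Int.mul_eq_one_iff_eq_one_or_neg_one.mp this with ⟨h, _⟩ | ⟨h, _⟩
      · exact Or.inl h
      · exact Or.inr h
    rcases hrval with rfl | rfl
    · -- r = 1 : c = 0, then ad = 1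
      have hc0 : c = 0 := by
        have : c * k = 0 := by linarith [e11]
        rcases mul_eq_zero.mp this with h | h
        · exact h
        · exact absurd h hk
      have had : a * d = 1 := by rw [hc0] at hdet; linarith
      rcases Int.mul_eq_one_iff_eq_one_or_neg_one.mp had with ⟨ha, hd⟩ | ⟨ha, hd⟩
      · -- g = T ^ b
        have hg : g = T ^ b := by
          apply Subtype.ext
          rw [ModularGroup.coe_T_zpow, Matrix.eta_fin_two (g : Matrix (Fin 2) (Fin 2) ℤ),
            ← hA, ← hB, ← hC, ← hD, ha, hc0, hd]
        rw [hg]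
        exact ⟨b, (_root_.map_zpow π T b).symm⟩
      · -- g = z₀ * T ^ (-b) with z₀ = -1 central
        have hz₀det : (!![-1, 0; 0, -1] : Matrix (Fin 2) (Fin 2) ℤ).det = 1 := by
          simp [Matrix.det_fin_two_of]
        set z₀ : Matrix.SpecialLinearGroup (Fin 2) ℤ := ⟨!![-1, 0; 0, -1], hz₀det⟩ with hz₀
        have hz₀mem : z₀ ∈ Subgroup.center (Matrix.SpecialLinearGroup (Fin 2) ℤ) := by
          apply Matrix.SpecialLinearGroup.mem_center_iff.mpr
          refine ⟨-1, by norm_num, ?_⟩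
          ext i j
          fin_cases i <;> fin_cases j <;> simp [Matrix.scalar_apply, hz₀]
        have hg : g = z₀ * T ^ (-b) := by
          apply Subtype.ext
          rw [Matrix.SpecialLinearGroup.coe_mul, ModularGroup.coe_T_zpow,
            Matrix.eta_fin_two (g : Matrix (Fin 2) (Fin 2) ℤ),
            ← hA, ← hB, ← hC, ← hD, ha, hc0, hd]
          show (!![-1, b; 0, -1] : Matrix (Fin 2) (Fin 2) ℤ) = !![-1, 0; 0, -1] * !![1, -b; 0, 1]
          norm_num [Matrix.mul_fin_two]
        rw [hg]
        have hπz₀ : π z₀ = 1 := (QuotientGroup.eq_one_iff z₀).mpr hz₀mem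
        rw [_root_.map_mul, hπz₀, one_mul]
        exact ⟨-b, (_root_.map_zpow π T (-b)).symm⟩
    · -- r = -1 : contradiction
      exfalso
      have hc0 : c = 0 := by linarith [e10]
      have hd0 : d = 0 := by rw [hc0] at e11; linarith
      rw [hc0, hd0] at hdet
      simp at hdet
  · -- reverse inclusion
    rintro ⟨m, rfl⟩
    apply Subgroup.mem_normalizer_iff.mpr
    intro h
    have key : ∀ j : ℤ, (π T) ^ m * (π (T ^ k)) ^ j * ((π T) ^ m)⁻¹ = (π (T ^ k)) ^ j := by
      intro j
      rw [← _root_.map_zpow, ← _root_.map_zpow, ← _root_.map_inv, ← _root_.map_mul, ← _root_.map_mul]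
      congr 1
      group
    constructor
    · rintro ⟨j, rfl⟩
      exact ⟨j, (key j).symm⟩
    · rintro ⟨j, hj⟩
      exact ⟨j, mul_left_cancel (mul_right_cancel ((key j).trans hj))⟩
end
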